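/- Splitting lemma for S: if a sequent Π_{Γ,Δ} ⊢ A (where Π_{Γ,Δ} is some permutation of the concatenation of Γ and Δ) is derivable in the system S, and Δ is prime to the sequence Γ,A, then both Δ ⊢ I and Γ ⊢ A are derivable in S. -/

import Mathlib

/-- Formulae of the system `S`: built from propositional letters and the constant `I`
(`unit`) with the binary connectives `⊗` (`tens`) and `→` (`imp`). -/
inductive Fml : Type
  | atom : ℕ → Fml
  | unit : Fml
  | tens : Fml → Fml → Fml
  | imp : Fml → Fml → Fml

/-- Derivability in the system `S`.  Sequents are `Γ ⊢ A` with `Γ` a finite list of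
formulae.  Axioms: `A ⊢ A` and `⊢ I`; structural rules: weakening, interchange and cut;
operational rules: `⊗⊢`, `⊢⊗`, `→⊢` and `⊢→`. -/
inductive SDeriv : List Fml → Fml → Prop
  | ax (A : Fml) : SDeriv [A] A
  | axI : SDeriv [] Fml.unit
  | weak {Γ A} : SDeriv Γ A → SDeriv (Fml.unit :: Γ) A
  | exch {Γ Δ : List Fml} {A B C} :
      SDeriv (Γ ++ A :: B :: Δ) C → SDeriv (Γ ++ B :: A :: Δ) C
  | cut {Γ Δ Θ : List Fml} {A B} :
      SDeriv Γ A → SDeriv (Δ ++ A :: Θ) B → SDeriv (Δ ++ Γ ++ Θ) B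
  | tensL {Γ Δ : List Fml} {A B C} :
      SDeriv (Γ ++ A :: B :: Δ) C → SDeriv (Γ ++ (A.tens B) :: Δ) C
  | tensR {Γ Δ : List Fml} {A B} :
      SDeriv Γ A → SDeriv Δ B → SDeriv (Γ ++ Δ) (A.tens B)
  | impL {Γ Δ : List Fml} {A B C} :
      SDeriv Γ A → SDeriv (B :: Δ) C → SDeriv (Γ ++ (A.imp B) :: Δ) C
  | impR {Γ : List Fml} {A B} :
      SDeriv (A :: Γ) B → SDeriv Γ (A.imp B)

/-- The propositional letter `p` occurs in the given formula. -/
def Fml.occurs (p : ℕ) : Fml → Prop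
  | .atom q => q = p
  | .unit => False
  | .tens A B => A.occurs p ∨ B.occurs p
  | .imp A B => A.occurs p ∨ B.occurs p

/-- `Γ` is prime to `Δ` when no propositional letter occurs both in a formula of `Γ`
and in a formula of `Δ`. -/
def PrimeTo (Γ Δ : List Fml) : Prop :=
  ∀ (p : ℕ), ∀ X ∈ Γ, ∀ Y ∈ Δ, X.occurs p → ¬Y.occurs p


/-!
Substitute `I` for the letters on one side of the split. The other side is prime to them, so it
is left unchanged, while every formula on the substituted side becomes letter-free. A letter-free
formula is both derivable and derives `I`, so such formulae can be cut out of the antecedent.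
Killing the letters of `Δ` leaves `Γ ⊢ A`; killing those of `Γ, A` leaves `Δ ⊢ A'`
with `A'` letter-free, and a cut with `A' ⊢ I` gives `Δ ⊢ I`.
-/

namespace Fml

def subst (s : ℕ → Fml) : Fml → Fml
  | atom q => s q
  | unit => unit
  | tens A B => tens (A.subst s) (B.subst s)
  | imp A B => imp (A.subst s) (B.subst s)

theorem occurs_subst {s : ℕ → Fml} {q : ℕ} :
    ∀ {F : Fml}, (F.subst s).occurs q ↔ ∃ p, F.occurs p ∧ (s p).occurs q
  | atom p => by simp [subst, occurs]
  | unit => by simp [subst, occurs]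
  | tens A B => by simp only [subst, occurs, occurs_subst, ← exists_or, or_and_right]
  | imp A B => by simp only [subst, occurs, occurs_subst, ← exists_or, or_and_right]

theorem subst_eq_self {s : ℕ → Fml} :
    ∀ {F : Fml}, (∀ p, F.occurs p → s p = atom p) → F.subst s = F
  | atom q, h => h q rfl
  | unit, _ => rfl
  | tens A B, h | imp A B, h => by
      rw [subst, subst_eq_self fun p hp => h p (.inl hp), subst_eq_self fun p hp => h p (.inr hp)]

def LetterFree (F : Fml) : Prop :=
  ∀ p, ¬F.occurs p

def LetterOf (Γ : List Fml) (p : ℕ) : Prop :=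
  ∃ X ∈ Γ, X.occurs p

open Classical in
noncomputable def unitOn (P : ℕ → Prop) (p : ℕ) : Fml :=
  if P p then unit else atom p

theorem occurs_unitOn {P : ℕ → Prop} {p q : ℕ} : (unitOn P p).occurs q ↔ ¬P p ∧ p = q := by
  unfold unitOn
  split_ifs with hp <;> simp [occurs, hp]

theorem letterFree_subst_unitOn {P : ℕ → Prop} {F : Fml} (hF : ∀ p, F.occurs p → P p) :
    (F.subst (unitOn P)).LetterFree := by
  intro q hq
  obtain ⟨p, hp, hpq⟩ := occurs_subst.1 hq
  exact (occurs_unitOn.1 hpq).1 (hF p hp)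

theorem subst_unitOn_eq_self {P : ℕ → Prop} {F : Fml} (hF : ∀ p, F.occurs p → ¬P p) :
    F.subst (unitOn P) = F :=
  subst_eq_self fun p hp => if_neg (hF p hp)

end Fml

namespace SDeriv

theorem subst {Γ : List Fml} {A : Fml} (s : ℕ → Fml) (h : SDeriv Γ A) :
    SDeriv (Γ.map (Fml.subst s)) (A.subst s) := by
  induction h with
  | ax A => exact ax _
  | axI => exact axI
  | weak _ ih => exact weak ih
  | exch _ ih => simpa using exch (by simpa using ih)
  | cut _ _ ih₁ ih₂ => simpa using cut ih₁ (by simpa using ih₂)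
  | tensL _ ih => simpa [Fml.subst] using tensL (by simpa using ih)
  | tensR _ _ ih₁ ih₂ => simpa [Fml.subst] using tensR ih₁ ih₂
  | impL _ _ ih₁ ih₂ => simpa [Fml.subst] using impL ih₁ (by simpa using ih₂)
  | impR _ ih => exact impR (by simpa using ih)

theorem append_perm {l l' : List Fml} (hl : l.Perm l') :
    ∀ {Γ : List Fml} {A : Fml}, SDeriv (Γ ++ l) A → SDeriv (Γ ++ l') A := by
  induction hl with
  | nil => exact id
  | cons x _ ih => intro Γ A h; simpa using ih (Γ := Γ ++ [x]) (by simpa using h)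
  | swap x y l => exact exch
  | trans _ _ ih₁ ih₂ => exact ih₂ ∘ ih₁

theorem perm {Γ Γ' : List Fml} {A : Fml} (h : SDeriv Γ A) (hΓ : Γ.Perm Γ') : SDeriv Γ' A :=
  append_perm (Γ := []) hΓ h

theorem cut_nil {X B : Fml} {Θ : List Fml} (hX : SDeriv [] X) (h : SDeriv (X :: Θ) B) :
    SDeriv Θ B :=
  cut (Δ := []) hX h

theorem of_append_of_forall_nil {Ξ Θ : List Fml} {B : Fml} (hΞ : ∀ X ∈ Ξ, SDeriv [] X)
    (h : SDeriv (Ξ ++ Θ) B) : SDeriv Θ B := by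
  induction Ξ with
  | nil => exact h
  | cons X Ξ ih =>
      exact ih (fun Y hY => hΞ Y (.tail X hY)) (cut_nil (hΞ X (.head Ξ)) h)

theorem of_letterFree {F : Fml} (hF : F.LetterFree) : SDeriv [] F ∧ SDeriv [F] Fml.unit := by
  induction F with
  | atom q => exact absurd rfl (hF q)
  | unit => exact ⟨axI, ax _⟩
  | tens A B ihA ihB =>
      obtain ⟨hA, hAI⟩ := ihA fun p hp => hF p (.inl hp)
      obtain ⟨hB, hBI⟩ := ihB fun p hp => hF p (.inr hp)
      refine ⟨tensR (Γ := []) hA hB, tensL (Γ := []) (Δ := []) ?_⟩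
      exact cut (Δ := [A]) (Θ := []) hBI (exch (Γ := []) (Δ := []) (weak hAI))
  | imp A B ihA ihB =>
      obtain ⟨hA, hAI⟩ := ihA fun p hp => hF p (.inl hp)
      obtain ⟨hB, hBI⟩ := ihB fun p hp => hF p (.inr hp)
      exact ⟨impR (cut (Δ := []) (Θ := []) hAI (weak hB)), impL (Γ := []) (Δ := []) hA hBI⟩

theorem subst_unitOn_of_append {P : ℕ → Prop} {Ξ Θ : List Fml} {B : Fml}
    (h : SDeriv (Ξ ++ Θ) B) (hΞ : ∀ X ∈ Ξ, ∀ p, X.occurs p → P p)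
    (hΘ : ∀ X ∈ Θ, ∀ p, X.occurs p → ¬P p) : SDeriv Θ (B.subst (Fml.unitOn P)) := by
  have hΘ_fixed : Θ.map (Fml.subst (Fml.unitOn P)) = Θ :=
    (List.map_congr_left fun X hX => Fml.subst_unitOn_eq_self (hΘ X hX)).trans (List.map_id Θ)
  have h' := h.subst (Fml.unitOn P)
  rw [List.map_append, hΘ_fixed] at h'
  refine of_append_of_forall_nil ?_ h'
  simp only [List.forall_mem_map]
  exact fun X hX => (of_letterFree (Fml.letterFree_subst_unitOn (hΞ X hX))).1

end SDeriv

/-- Splitting lemma for `S`: if some permutation of `Γ, Δ` derives `A` and `Δ` is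
prime to `Γ, A`, then `Δ ⊢ I` and `Γ ⊢ A` are derivable in `S`. -/
theorem splitting (Γ Δ Φ : List Fml) (A : Fml)
    (hperm : Φ.Perm (Γ ++ Δ)) (h : SDeriv Φ A)
    (hprime : PrimeTo Δ (Γ ++ [A])) :
    SDeriv Δ Fml.unit ∧ SDeriv Γ A := by
  have hA : A ∈ Γ ++ [A] := List.mem_append_right Γ (List.mem_singleton_self A)
  constructor
  · have hΔ : SDeriv Δ (A.subst (Fml.unitOn (Fml.LetterOf (Γ ++ [A])))) :=
      (h.perm hperm).subst_unitOn_of_append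
        (fun X hX p hp => ⟨X, List.mem_append_left _ hX, hp⟩)
        (fun Y hY p hp ⟨X, hX, hXp⟩ => hprime p Y hY X hX hp hXp)
    have hAI : SDeriv [A.subst (Fml.unitOn (Fml.LetterOf (Γ ++ [A])))] Fml.unit :=
      (SDeriv.of_letterFree (Fml.letterFree_subst_unitOn fun p hp => ⟨A, hA, hp⟩)).2
    simpa using SDeriv.cut (Δ := []) (Θ := []) hΔ hAI
  · have hΓ : SDeriv Γ (A.subst (Fml.unitOn (Fml.LetterOf Δ))) :=
      (h.perm (hperm.trans List.perm_append_comm)).subst_unitOn_of_append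
        (fun Y hY p hp => ⟨Y, hY, hp⟩)
        (fun X hX p hp ⟨Y, hY, hYp⟩ => hprime p Y hY X (List.mem_append_left _ hX) hYp hp)
    rwa [Fml.subst_unitOn_eq_self fun p hp ⟨Y, hY, hYp⟩ => hprime p Y hY A hA hYp hp] at hΓ
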